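/- The set 𝒢 = {id_ℋ + C : C ∈ 𝔟} is a connected Abelian Lie group under composition: (i) 𝒢 is closed under composition of endomorphisms; (ii) id_ℋ ∈ 𝒢; (iii) every element of 𝒢 is invertible and its inverse again lies in 𝒢; (iv) any two elements of 𝒢 commute; and (v) 𝒢 is a path-connected (indeed convex) subset of End(ℋ). -/

import Mathlib

set_option synthInstance.maxHeartbeats 1000000
set_option maxHeartbeats 1000000

namespace CC

abbrev FockSpace (K : ℕ) := (Fin K → Bool) → ℝ

noncomputable def eVec (K : ℕ) (k : Fin K → Bool) : FockSpace K := Pi.single k 1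

def nTrue (K : ℕ) (k : Fin K → Bool) : ℕ :=
  (Finset.univ.filter fun j => k j = true).card

def sgn (K : ℕ) (i : Fin K) (k : Fin K → Bool) : ℝ :=
  (-1 : ℝ) ^ (Finset.univ.filter fun j => j < i ∧ k j = true).card

noncomputable def creOp (K : ℕ) (i : Fin K) : Module.End ℝ (FockSpace K) where
  toFun f := fun m =>
    if m i = true then
      sgn K i (Function.update m i false) * f (Function.update m i false)
    else 0
  map_add' f g := by
    funext m
    by_cases h : m i = true <;> simp [h, mul_add]
  map_smul' c f := by
    funext m
    by_cases h : m i = true <;> simp [h] <;> ring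

noncomputable def annOp (K : ℕ) (i : Fin K) : Module.End ℝ (FockSpace K) where
  toFun f := fun m =>
    if m i = true then 0
    else sgn K i m * f (Function.update m i true)
  map_add' f g := by
    funext m
    by_cases h : m i = true <;> simp [h, mul_add]
  map_smul' c f := by
    funext m
    by_cases h : m i = true <;> simp [h] <;> ring

structure ExIdx (K N : ℕ) where
  r : ℕ
  r_pos : 1 ≤ r
  r_le : r ≤ N
  occ : Fin r → Fin K
  vir : Fin r → Fin K
  occ_mono : StrictMono occ
  vir_mono : StrictMono vir
  occ_lt : ∀ j, ((occ j : Fin K) : ℕ) < N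
  vir_ge : ∀ j, N ≤ ((vir j : Fin K) : ℕ)

noncomputable def excOp (K N : ℕ) (μ : ExIdx K N) : Module.End ℝ (FockSpace K) :=
  (List.ofFn fun j => creOp K (μ.vir j)).prod *
    ((List.ofFn fun j => annOp K (μ.occ j)).reverse).prod

noncomputable def dexcOp (K N : ℕ) (μ : ExIdx K N) : Module.End ℝ (FockSpace K) :=
  (List.ofFn fun j => creOp K (μ.occ j)).prod *
    ((List.ofFn fun j => annOp K (μ.vir j)).reverse).prod

noncomputable def Hspace (K N : ℕ) : Submodule ℝ (FockSpace K) :=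
  Submodule.span ℝ {f | ∃ k : Fin K → Bool, nTrue K k = N ∧ f = eVec K k}

def refOcc (K N : ℕ) : Fin K → Bool := fun j => decide ((j : ℕ) < N)

noncomputable def refVec (K N : ℕ) : FockSpace K := eVec K (refOcc K N)

abbrev ExcInvariant (K N : ℕ) : Prop :=
  ∀ μ : ExIdx K N, ∀ x ∈ Hspace K N, excOp K N μ x ∈ Hspace K N

noncomputable def excResL (K N : ℕ) (hX : ExcInvariant K N) (μ : ExIdx K N) :
    Hspace K N →L[ℝ] Hspace K N :=
  LinearMap.toContinuousLinearMap ((excOp K N μ).restrict (hX μ))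

noncomputable def clusterSpace (K N : ℕ) (hX : ExcInvariant K N) :
    Submodule ℝ (Hspace K N →L[ℝ] Hspace K N) :=
  Submodule.span ℝ (Set.range (excResL K N hX))

noncomputable def Gset (K N : ℕ) (hX : ExcInvariant K N) :
    Set (Hspace K N →L[ℝ] Hspace K N) :=
  {G | ∃ C ∈ clusterSpace K N hX, G = 1 + C}

noncomputable def ip (K : ℕ) (f g : FockSpace K) : ℝ :=
  ∑ k : Fin K → Bool, f k * g k

lemma nTrue_refOcc (K N : ℕ) (h : N ≤ K) : nTrue K (refOcc K N) = N := by
  unfold nTrue refOcc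
  have : (Finset.univ.filter fun j : Fin K => decide ((j : ℕ) < N) = true)
      = Finset.map (Fin.castLEEmb h) Finset.univ := by
    ext j
    simp only [Finset.mem_filter, Finset.mem_univ, true_and, decide_eq_true_eq,
      Finset.mem_map, Fin.castLEEmb_apply]
    constructor
    · intro hj
      exact ⟨⟨(j : ℕ), hj⟩, by ext; simp⟩
    · rintro ⟨i, -, rfl⟩
      simpa using i.isLt
  rw [this]
  simp

lemma refVec_mem (K N : ℕ) (h : N ≤ K) : refVec K N ∈ Hspace K N :=
  Submodule.subset_span ⟨refOcc K N, nTrue_refOcc K N h, rfl⟩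

noncomputable def refState (K N : ℕ) (h : N ≤ K) : Hspace K N :=
  ⟨refVec K N, refVec_mem K N h⟩

noncomputable instance instTopRingCLM (K N : ℕ) :
    IsTopologicalRing (Hspace K N →L[ℝ] Hspace K N) := by
  exact @NonUnitalSeminormedRing.toIsTopologicalRing (Hspace K N →L[ℝ] Hspace K N) _

noncomputable def expE (K N : ℕ) (T : Hspace K N →L[ℝ] Hspace K N) :
    Hspace K N →L[ℝ] Hspace K N :=
  NormedSpace.exp T


lemma sgn_update (K : ℕ) (i j : Fin K) (b : Bool) (k : Fin K → Bool) :
    sgn K i (Function.update k j b) = (if j < i ∧ k j ≠ b then -1 else 1) * sgn K i k := by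
  by_cases hb : k j = b
  · have : Function.update k j b = k := by
      funext t; by_cases ht : t = j <;> simp [Function.update, ht, hb]
    simp [this, hb]
  by_cases hji : j < i
  · simp only [hji, hb, if_pos, and_true, ne_eq, not_false_iff, true_and]
    unfold sgn
    cases b with
    | true =>
      have hkj : k j = false := by simpa [hb] using hb
      have hset : (Finset.univ.filter fun t => t < i ∧ Function.update k j true t = true)
          = insert j (Finset.univ.filter fun t => t < i ∧ k t = true) := by
        ext t
        by_cases ht : t = j <;> simp [Function.update, ht, hji, hkj]
      have hnot : j ∉ (Finset.univ.filter fun t => t < i ∧ k t = true) := by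
        simp [hkj]
      rw [hset, Finset.card_insert_of_notMem hnot]
      ring
    | false =>
      have hkj : k j = true := by simpa using hb
      have hset : (Finset.univ.filter fun t => t < i ∧ k t = true)
          = insert j (Finset.univ.filter fun t => t < i ∧ Function.update k j false t = true) := by
        ext t
        by_cases ht : t = j <;> simp [Function.update, ht, hji, hkj]
      have hnot : j ∉ (Finset.univ.filter fun t => t < i ∧ Function.update k j false t = true) := by
        simp [Function.update]
      rw [hset, Finset.card_insert_of_notMem hnot]
      ring
  · have hset : (Finset.univ.filter fun t => t < i ∧ Function.update k j b t = true)
        = (Finset.univ.filter fun t => t < i ∧ k t = true) := by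
      ext t
      by_cases ht : t = j <;> simp [Function.update, ht, hji]
    simp [sgn, hset, hji]

lemma sgn_ignore (K : ℕ) (i : Fin K) (b : Bool) (k : Fin K → Bool) :
    sgn K i (Function.update k i b) = sgn K i k := by
  unfold sgn
  congr 1
  apply Finset.card_bij (fun a _ => a) ?_ (by simp) ?_
  · intro a ha
    simp only [Finset.mem_filter, Finset.mem_univ, true_and] at ha ⊢
    refine ⟨ha.1, ?_⟩
    have h2 := ha.2
    rwa [Function.update_of_ne (ne_of_lt ha.1)] at h2
  · intro a ha
    simp only [Finset.mem_filter, Finset.mem_univ, true_and] at ha ⊢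
    exact ⟨a, ⟨ha.1, by rw [Function.update_of_ne (ne_of_lt ha.1)]; exact ha.2⟩, rfl⟩

lemma creOp_eVec (K : ℕ) (i : Fin K) (k : Fin K → Bool) :
    creOp K i (eVec K k) =
      if k i = true then 0 else sgn K i k • eVec K (Function.update k i true) := by
  funext m
  show (if m i = true then
      sgn K i (Function.update m i false) * eVec K k (Function.update m i false) else 0) = _
  by_cases hk : k i = true
  · rw [if_pos hk]
    by_cases hm : m i = true
    · have : Function.update m i false ≠ k := fun h => by
        have := congrFun h i; simp [hk] at this
      simp [hm, eVec, Pi.single_apply, this]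
    · simp [hm]
  · have hkf : k i = false := by simpa using hk
    rw [if_neg hk]
    by_cases hm : m i = true
    · by_cases hmk : Function.update m i false = k
      · have hm' : m = Function.update k i true := by
          funext t
          by_cases ht : t = i
          · subst ht; simp [hm]
          · rw [← hmk]; simp [Function.update, ht]
        have e1 : eVec K k (Function.update m i false) = 1 := by
          simp [eVec, Pi.single_apply, hmk]
        have e2 : eVec K (Function.update k i true) m = 1 := by
          simp [eVec, Pi.single_apply, hm']
        rw [if_pos hm, e1, mul_one, Pi.smul_apply, e2, smul_eq_mul, mul_one, hmk]
      · have hm' : m ≠ Function.update k i true := by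
          intro h
          apply hmk
          rw [h, Function.update_idem, ← hkf, Function.update_eq_self]
        simp [hm, eVec, Pi.single_apply, hmk, hm']
    · have hm' : m ≠ Function.update k i true := fun h => by
        have := congrFun h i; simp [hm] at this
      simp [hm, eVec, Pi.single_apply, hm']

lemma annOp_eVec (K : ℕ) (i : Fin K) (k : Fin K → Bool) :
    annOp K i (eVec K k) =
      if k i = true then sgn K i k • eVec K (Function.update k i false) else 0 := by
  funext m
  show (if m i = true then 0 else sgn K i m * eVec K k (Function.update m i true)) = _
  by_cases hk : k i = true
  · rw [if_pos hk]
    by_cases hm : m i = true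
    · have hm' : m ≠ Function.update k i false := fun h => by
        have := congrFun h i; simp [hm] at this
      simp [hm, eVec, Pi.single_apply, hm']
    · have hmf : m i = false := by simpa using hm
      by_cases hmk : Function.update m i true = k
      · have hm' : m = Function.update k i false := by
          funext t
          by_cases ht : t = i
          · subst ht; simp [hmf]
          · rw [← hmk]; simp [Function.update, ht]
        have e1 : eVec K k (Function.update m i true) = 1 := by
          simp [eVec, Pi.single_apply, hmk]
        have e2 : eVec K (Function.update k i false) m = 1 := by
          simp [eVec, Pi.single_apply, hm']
        rw [if_neg hm, e1, mul_one, Pi.smul_apply, e2, smul_eq_mul, mul_one, hm', sgn_ignore]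
      · have hm' : m ≠ Function.update k i false := by
          intro h
          apply hmk
          rw [h, Function.update_idem, ← hk, Function.update_eq_self]
        simp [hm, eVec, Pi.single_apply, hmk, hm']
  · rw [if_neg hk]
    by_cases hm : m i = true
    · simp [hm]
    · have : Function.update m i true ≠ k := fun h => by
        have := congrFun h i; simp [hk] at this
      simp [hm, eVec, Pi.single_apply, this]

lemma end_ext_eVec {K : ℕ} {A B : Module.End ℝ (FockSpace K)}
    (h : ∀ k, A (eVec K k) = B (eVec K k)) : A = B := by
  apply LinearMap.pi_ext
  intro k x
  have : (Pi.single k x : FockSpace K) = x • eVec K k := by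
    simp [eVec, ← Pi.single_smul]
  rw [this, map_smul, map_smul, h]

lemma sgn_cross {K : ℕ} {i j : Fin K} (hij : i ≠ j) {b c : Bool} {k : Fin K → Bool}
    (h1 : k j ≠ b) (h2 : k i ≠ c) :
    sgn K j k * sgn K i (Function.update k j b) =
      -(sgn K i k * sgn K j (Function.update k i c)) := by
  rw [sgn_update, sgn_update]
  rcases lt_trichotomy i j with h | h | h
  · rw [if_neg (by intro hh; exact absurd (lt_trans h hh.1) (lt_irrefl _)),
      if_pos ⟨h, h2⟩]
    ring
  · exact absurd h hij
  · rw [if_pos ⟨h, h1⟩, if_neg (by intro hh; exact absurd (lt_trans h hh.1) (lt_irrefl _))]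
    ring

lemma cre_sq (K : ℕ) (i : Fin K) : creOp K i * creOp K i = 0 := by
  apply end_ext_eVec
  intro k
  rw [Module.End.mul_apply, creOp_eVec]
  by_cases hk : k i = true
  · simp [hk]
  · rw [if_neg hk, map_smul, creOp_eVec]
    simp

lemma ann_sq (K : ℕ) (i : Fin K) : annOp K i * annOp K i = 0 := by
  apply end_ext_eVec
  intro k
  rw [Module.End.mul_apply, annOp_eVec]
  by_cases hk : k i = true
  · rw [if_pos hk, map_smul, annOp_eVec]
    simp
  · simp [hk]

lemma cre_cre_anti (K : ℕ) {i j : Fin K} (hij : i ≠ j) :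
    creOp K i * creOp K j = -(creOp K j * creOp K i) := by
  apply end_ext_eVec
  intro k
  rw [LinearMap.neg_apply, Module.End.mul_apply, Module.End.mul_apply,
    creOp_eVec, creOp_eVec]
  by_cases hkj : k j = true
  · rw [if_pos hkj]
    by_cases hki : k i = true
    · simp [hki]
    · rw [if_neg hki, map_zero, map_smul, creOp_eVec,
        if_pos (show Function.update k i true j = true by
          simpa [Function.update_of_ne (Ne.symm hij)] using hkj)]
      simp
  · rw [if_neg hkj]
    by_cases hki : k i = true
    · rw [if_pos hki, map_smul, creOp_eVec,
        if_pos (show Function.update k j true i = true by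
          simpa [Function.update_of_ne hij] using hki)]
      simp
    · rw [if_neg hki, map_smul, map_smul, creOp_eVec, creOp_eVec,
        if_neg (show ¬Function.update k j true i = true by
          simpa [Function.update_of_ne hij] using hki),
        if_neg (show ¬Function.update k i true j = true by
          simpa [Function.update_of_ne (Ne.symm hij)] using hkj),
        smul_smul, smul_smul, Function.update_comm hij,
        sgn_cross hij (b := true) (c := true) (by simp [hkj]) (by simp [hki])]
      simp

lemma ann_ann_anti (K : ℕ) {i j : Fin K} (hij : i ≠ j) :
    annOp K i * annOp K j = -(annOp K j * annOp K i) := by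
  apply end_ext_eVec
  intro k
  rw [LinearMap.neg_apply, Module.End.mul_apply, Module.End.mul_apply,
    annOp_eVec, annOp_eVec]
  by_cases hkj : k j = true
  · rw [if_pos hkj]
    by_cases hki : k i = true
    · rw [if_pos hki, map_smul, map_smul, annOp_eVec, annOp_eVec,
        if_pos (show Function.update k j false i = true by
          simpa [Function.update_of_ne hij] using hki),
        if_pos (show Function.update k i false j = true by
          simpa [Function.update_of_ne (Ne.symm hij)] using hkj),
        smul_smul, smul_smul, Function.update_comm hij,
        sgn_cross hij (b := false) (c := false) (by simp [hkj]) (by simp [hki])]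
      simp
    · rw [if_neg hki, map_zero, map_smul, annOp_eVec,
        if_neg (show ¬Function.update k j false i = true by
          simpa [Function.update_of_ne hij] using hki)]
      simp
  · rw [if_neg hkj]
    by_cases hki : k i = true
    · rw [if_pos hki, map_zero, map_smul, annOp_eVec,
        if_neg (show ¬Function.update k i false j = true by
          simpa [Function.update_of_ne (Ne.symm hij)] using hkj)]
      simp
    · simp [hki]

lemma ann_cre_anti (K : ℕ) {i j : Fin K} (hij : i ≠ j) :
    annOp K i * creOp K j = -(creOp K j * annOp K i) := by
  apply end_ext_eVec
  intro k
  rw [LinearMap.neg_apply, Module.End.mul_apply, Module.End.mul_apply,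
    creOp_eVec, annOp_eVec]
  by_cases hkj : k j = true
  · rw [if_pos hkj]
    by_cases hki : k i = true
    · rw [if_pos hki, map_zero, map_smul, creOp_eVec,
        if_pos (show Function.update k i false j = true by
          simpa [Function.update_of_ne (Ne.symm hij)] using hkj)]
      simp
    · simp [hki]
  · rw [if_neg hkj]
    by_cases hki : k i = true
    · rw [if_pos hki, map_smul, map_smul, annOp_eVec, creOp_eVec,
        if_pos (show Function.update k j true i = true by
          simpa [Function.update_of_ne hij] using hki),
        if_neg (show ¬Function.update k i false j = true by
          simpa [Function.update_of_ne (Ne.symm hij)] using hkj),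
        smul_smul, smul_smul, Function.update_comm hij,
        sgn_cross hij (b := true) (c := false) (by simp [hkj]) (by simp [hki])]
      simp
    · rw [if_neg hki, map_zero, map_smul, annOp_eVec,
        if_neg (show ¬Function.update k j true i = true by
          simpa [Function.update_of_ne hij] using hki)]
      simp


lemma perm_sign {R : Type*} [Ring R] {l l' : List R} (h : l.Perm l')
    (hanti : ∀ a ∈ l, ∀ b ∈ l, a * b = -(b * a)) :
    l.prod = l'.prod ∨ l.prod = -l'.prod := by
  induction h with
  | nil => exact Or.inl rfl
  | @cons x t1 t2 h ih =>
    have hanti' : ∀ a ∈ t1, ∀ b ∈ t1, a * b = -(b * a) := fun a ha b hb =>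
      hanti a (List.mem_cons_of_mem x ha) b (List.mem_cons_of_mem x hb)
    rcases ih hanti' with h1 | h1
    · exact Or.inl (by simp [List.prod_cons, h1])
    · exact Or.inr (by simp [List.prod_cons, h1])
  | swap x y t =>
    right
    have hxy : y * x = -(x * y) :=
      hanti y (by simp) x (by simp)
    simp only [List.prod_cons, ← mul_assoc, hxy, neg_mul]
  | @trans l1 l2 l3 h1 h2 ih1 ih2 =>
    have hanti2 : ∀ a ∈ l2, ∀ b ∈ l2, a * b = -(b * a) := fun a ha b hb =>
      hanti a (h1.mem_iff.mpr ha) b (h1.mem_iff.mpr hb)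
    rcases ih1 hanti with ha | ha <;> rcases ih2 hanti2 with hb | hb <;>
      simp [ha, hb]

lemma single_swap {R : Type*} [Ring R] (a : R) (l : List R)
    (h : ∀ b ∈ l, a * b = -(b * a)) :
    a * l.prod = if Even l.length then l.prod * a else -(l.prod * a) := by
  induction l with
  | nil => simp
  | cons b t ih =>
    have hb : a * b = -(b * a) := h b (by simp)
    have ih' := ih (fun c hc => h c (List.mem_cons_of_mem b hc))
    rw [List.prod_cons, ← mul_assoc, hb, neg_mul, mul_assoc, ih']
    by_cases he : Even t.length
    · rw [if_pos he, if_neg (by simpa [Nat.even_add_one] using he)]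
      simp [mul_assoc]
    · rw [if_neg he, if_pos (by simpa [Nat.even_add_one] using he)]
      simp [mul_assoc]

lemma blocks_comm {R : Type*} [Ring R] (l1 l2 : List R)
    (h : ∀ a ∈ l1, ∀ b ∈ l2, a * b = -(b * a))
    (he : Even l1.length) :
    l1.prod * l2.prod = l2.prod * l1.prod := by
  induction l2 with
  | nil => simp
  | cons b t ih =>
    have hb : b * l1.prod = if Even l1.length then l1.prod * b else -(l1.prod * b) :=
      single_swap b l1 (fun c hc => by
        have hcb := h c hc b (by simp)
        rw [hcb, neg_neg])
    rw [if_pos he] at hb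
    have ih' := ih (fun a ha c hc => h a ha c (List.mem_cons_of_mem b hc))
    simp only [List.prod_cons]
    rw [← mul_assoc, ← hb, mul_assoc, ih', ← mul_assoc]

lemma prod_zero_of_two_le_count {R : Type*} [Ring R] [DecidableEq R] {l : List R} {x : R}
    (hc : 2 ≤ l.count x) (hx : x * x = 0)
    (hanti : ∀ a ∈ l, ∀ b ∈ l, a * b = -(b * a)) :
    l.prod = 0 := by
  have hx1 : x ∈ l := List.count_pos_iff.mp (by omega)
  have hperm1 : l.Perm (x :: l.erase x) := List.perm_cons_erase hx1
  have hx2 : x ∈ l.erase x := by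
    have := List.count_erase_self (a := x) (l := l)
    exact List.count_pos_iff.mp (by omega)
  have hperm2 : (l.erase x).Perm (x :: (l.erase x).erase x) := List.perm_cons_erase hx2
  have hperm : l.Perm (x :: x :: (l.erase x).erase x) :=
    hperm1.trans (hperm2.cons x)
  rcases perm_sign hperm hanti with h | h <;>
    rw [h] <;> simp [List.prod_cons, ← mul_assoc, hx]


noncomputable def gOp (K : ℕ) (p : Bool × Fin K) : Module.End ℝ (FockSpace K) :=
  if p.1 then creOp K p.2 else annOp K p.2

lemma gOp_sq (K : ℕ) (p : Bool × Fin K) : gOp K p * gOp K p = 0 := by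
  rcases p with ⟨b, i⟩
  cases b <;> simp [gOp, cre_sq, ann_sq]

lemma gOp_anti (K : ℕ) {p q : Bool × Fin K} (h : p.2 ≠ q.2) :
    gOp K p * gOp K q = -(gOp K q * gOp K p) := by
  rcases p with ⟨b, i⟩
  rcases q with ⟨c, j⟩
  simp only at h
  cases b <;> cases c <;> simp only [gOp, Bool.false_eq_true, if_true, if_false]
  · exact ann_ann_anti K h
  · exact ann_cre_anti K h
  · rw [ann_cre_anti K (Ne.symm h), neg_neg]
  · exact cre_cre_anti K h

def Good (K N : ℕ) (p : Bool × Fin K) : Prop :=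
  (p.1 = true → N ≤ (p.2 : ℕ)) ∧ (p.1 = false → (p.2 : ℕ) < N)

lemma gOp_anti_good (K N : ℕ) {p q : Bool × Fin K}
    (hp : Good K N p) (hq : Good K N q) :
    gOp K p * gOp K q = -(gOp K q * gOp K p) := by
  by_cases h : p.2 = q.2
  · have hpq : p = q := by
      rcases p with ⟨b, i⟩; rcases q with ⟨c, j⟩
      simp only at h
      subst h
      rcases hp with ⟨hp1, hp2⟩
      rcases hq with ⟨hq1, hq2⟩
      cases b <;> cases c
      · rfl
      · exact absurd (lt_of_lt_of_le (hp2 rfl) (hq1 rfl)) (lt_irrefl _)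
      · exact absurd (lt_of_lt_of_le (hq2 rfl) (hp1 rfl)) (lt_irrefl _)
      · rfl
    rw [hpq, gOp_sq, neg_zero]
  · exact gOp_anti K h

def mListE (K N : ℕ) (μ : ExIdx K N) : List (Bool × Fin K) :=
  ((List.ofFn μ.vir).map fun x => (true, x)) ++
    (((List.ofFn μ.occ).reverse).map fun x => (false, x))

lemma excOp_eq_prod (K N : ℕ) (μ : ExIdx K N) :
    excOp K N μ = ((mListE K N μ).map (gOp K)).prod := by
  unfold excOp mListE
  rw [List.map_append, List.prod_append, List.map_map, List.map_map]
  congr 1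
  · rw [List.map_ofFn]
    rfl
  · rw [List.map_reverse, List.map_ofFn]
    rfl

lemma mListE_good (K N : ℕ) (μ : ExIdx K N) : ∀ p ∈ mListE K N μ, Good K N p := by
  intro p hp
  unfold mListE at hp
  rcases List.mem_append.mp hp with h | h
  · rcases List.mem_map.mp h with ⟨x, hx, rfl⟩
    rcases List.mem_ofFn.mp hx with ⟨j, rfl⟩
    exact ⟨fun _ => μ.vir_ge j, fun h => by simp at h⟩
  · rcases List.mem_map.mp h with ⟨x, hx, rfl⟩
    rcases List.mem_ofFn.mp (List.mem_reverse.mp hx) with ⟨j, rfl⟩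
    exact ⟨fun h => by simp at h, fun _ => μ.occ_lt j⟩

lemma mListE_length (K N : ℕ) (μ : ExIdx K N) : (mListE K N μ).length = μ.r + μ.r := by
  simp [mListE]

lemma anti_of_good (K N : ℕ) {l : List (Bool × Fin K)} (hg : ∀ p ∈ l, Good K N p) :
    ∀ a ∈ l.map (gOp K), ∀ b ∈ l.map (gOp K), a * b = -(b * a) := by
  intro a ha b hb
  rcases List.mem_map.mp ha with ⟨p, hp, rfl⟩
  rcases List.mem_map.mp hb with ⟨q, hq, rfl⟩
  exact gOp_anti_good K N (hg p hp) (hg q hq)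

lemma excOp_comm (K N : ℕ) (μ ν : ExIdx K N) :
    excOp K N μ * excOp K N ν = excOp K N ν * excOp K N μ := by
  rw [excOp_eq_prod, excOp_eq_prod]
  apply blocks_comm
  · intro a ha b hb
    rcases List.mem_map.mp ha with ⟨p, hp, rfl⟩
    rcases List.mem_map.mp hb with ⟨q, hq, rfl⟩
    exact gOp_anti_good K N (mListE_good K N μ p hp) (mListE_good K N ν q hq)
  · rw [List.length_map, mListE_length]
    exact ⟨μ.r, rfl⟩

lemma cardN (K N : ℕ) (h : N ≤ K) :
    (Finset.univ.filter fun j : Fin K => (j : ℕ) < N).card = N := by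
  have heq : (Finset.univ.filter fun j : Fin K => (j : ℕ) < N)
      = Finset.map (Fin.castLEEmb h) Finset.univ := by
    ext j
    simp only [Finset.mem_filter, Finset.mem_univ, true_and, Finset.mem_map,
      Fin.castLEEmb_apply]
    constructor
    · intro hj
      exact ⟨⟨(j : ℕ), hj⟩, by ext; simp⟩
    · rintro ⟨i, -, rfl⟩
      simpa using i.isLt
  rw [heq]
  simp

lemma excOp_mul_structure (K N : ℕ) (hNK : N ≤ K) (μ ν : ExIdx K N) :
    excOp K N μ * excOp K N ν = 0 ∨
      ∃ ρ : ExIdx K N, ρ.r = μ.r + ν.r ∧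
        (excOp K N μ * excOp K N ν = excOp K N ρ ∨
         excOp K N μ * excOp K N ν = -excOp K N ρ) := by
  set L : List (Bool × Fin K) := mListE K N μ ++ mListE K N ν with hL
  have hgood : ∀ p ∈ L, Good K N p := by
    intro p hp
    rcases List.mem_append.mp hp with h | h
    exacts [mListE_good K N μ p h, mListE_good K N ν p h]
  have hanti := anti_of_good K N hgood
  have hprod : excOp K N μ * excOp K N ν = (L.map (gOp K)).prod := by
    rw [excOp_eq_prod, excOp_eq_prod, hL, List.map_append, List.prod_append]
  by_cases hnd : L.Nodup
  · right
    obtain ⟨hndμ, hndν, hdisj⟩ := List.nodup_append.mp hnd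
    set SV : Finset (Fin K) :=
      (List.ofFn μ.vir).toFinset ∪ (List.ofFn ν.vir).toFinset with hSV
    set SO : Finset (Fin K) :=
      (List.ofFn μ.occ).toFinset ∪ (List.ofFn ν.occ).toFinset with hSO
    have hVμ : (List.ofFn μ.vir).Nodup := (List.nodup_ofFn).mpr μ.vir_mono.injective
    have hVν : (List.ofFn ν.vir).Nodup := (List.nodup_ofFn).mpr ν.vir_mono.injective
    have hOμ : (List.ofFn μ.occ).Nodup := (List.nodup_ofFn).mpr μ.occ_mono.injective
    have hOν : (List.ofFn ν.occ).Nodup := (List.nodup_ofFn).mpr ν.occ_mono.injective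
    have hdV : Disjoint (List.ofFn μ.vir).toFinset (List.ofFn ν.vir).toFinset := by
      rw [Finset.disjoint_left]
      intro a haμ haν
      refine hdisj (true, a) ?_ (true, a) ?_ rfl
      · exact List.mem_append_left _
          (List.mem_map_of_mem (List.mem_toFinset.mp haμ))
      · exact List.mem_append_left _
          (List.mem_map_of_mem (List.mem_toFinset.mp haν))
    have hdO : Disjoint (List.ofFn μ.occ).toFinset (List.ofFn ν.occ).toFinset := by
      rw [Finset.disjoint_left]
      intro a haμ haν
      refine hdisj (false, a) ?_ (false, a) ?_ rfl
      · exact List.mem_append_right _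
          (List.mem_map_of_mem (List.mem_reverse.mpr (List.mem_toFinset.mp haμ)))
      · exact List.mem_append_right _
          (List.mem_map_of_mem (List.mem_reverse.mpr (List.mem_toFinset.mp haν)))
    have hSVcard : SV.card = μ.r + ν.r := by
      rw [hSV, Finset.card_union_of_disjoint hdV, List.toFinset_card_of_nodup hVμ,
        List.toFinset_card_of_nodup hVν, List.length_ofFn, List.length_ofFn]
    have hSOcard : SO.card = μ.r + ν.r := by
      rw [hSO, Finset.card_union_of_disjoint hdO, List.toFinset_card_of_nodup hOμ,
        List.toFinset_card_of_nodup hOν, List.length_ofFn, List.length_ofFn]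
    set lV : List (Fin K) := SV.sort (· ≤ ·) with hlVdef
    set lO : List (Fin K) := SO.sort (· ≤ ·) with hlOdef
    have hlV : lV.length = μ.r + ν.r := by rw [hlVdef, Finset.length_sort, hSVcard]
    have hlO : lO.length = μ.r + ν.r := by rw [hlOdef, Finset.length_sort, hSOcard]
    have hsortV : lV.SortedLT := Finset.sortedLT_sort SV
    have hsortO : lO.SortedLT := Finset.sortedLT_sort SO
    have hmemSO : ∀ a ∈ SO, (a : ℕ) < N := by
      intro a ha
      rcases Finset.mem_union.mp ha with h | h
      · rcases List.mem_ofFn.mp (List.mem_toFinset.mp h) with ⟨j, rfl⟩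
        exact μ.occ_lt j
      · rcases List.mem_ofFn.mp (List.mem_toFinset.mp h) with ⟨j, rfl⟩
        exact ν.occ_lt j
    have hmemSV : ∀ a ∈ SV, N ≤ (a : ℕ) := by
      intro a ha
      rcases Finset.mem_union.mp ha with h | h
      · rcases List.mem_ofFn.mp (List.mem_toFinset.mp h) with ⟨j, rfl⟩
        exact μ.vir_ge j
      · rcases List.mem_ofFn.mp (List.mem_toFinset.mp h) with ⟨j, rfl⟩
        exact ν.vir_ge j
    have hrle : μ.r + ν.r ≤ N := by
      rw [← hSOcard]
      calc SO.card ≤ (Finset.univ.filter fun j : Fin K => (j : ℕ) < N).card :=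
            Finset.card_le_card (fun a ha => by
              simp only [Finset.mem_filter, Finset.mem_univ, true_and]
              exact hmemSO a ha)
        _ = N := cardN K N hNK
    set ρ : ExIdx K N :=
      { r := μ.r + ν.r
        r_pos := le_trans μ.r_pos (Nat.le_add_right _ _)
        r_le := hrle
        occ := fun t => lO.get (Fin.cast hlO.symm t)
        vir := fun t => lV.get (Fin.cast hlV.symm t)
        occ_mono := fun a b hab => List.SortedLT.strictMono_get hsortO (by exact hab)
        vir_mono := fun a b hab => List.SortedLT.strictMono_get hsortV (by exact hab)
        occ_lt := fun j => hmemSO _ ((Finset.mem_sort _).mp (by apply List.get_mem))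
        vir_ge := fun j => hmemSV _ ((Finset.mem_sort _).mp (by apply List.get_mem)) } with hρdef
    have hofnO : List.ofFn ρ.occ = lO := by
      apply List.ext_get (by simp [hρdef, hlO])
      intro n h1 h2
      simp [hρdef, List.get_ofFn]; rfl
    have hofnV : List.ofFn ρ.vir = lV := by
      apply List.ext_get (by simp [hρdef, hlV])
      intro n h1 h2
      simp [hρdef, List.get_ofFn]; rfl
    have hmρ : mListE K N ρ =
        (lV.map fun x => (true, x)) ++ ((lO.reverse).map fun x => (false, x)) := by
      rw [mListE, hofnO, hofnV]
    have hndρ : (mListE K N ρ).Nodup := by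
      rw [hmρ]
      refine List.Nodup.append ?_ ?_ ?_
      · exact (Finset.sort_nodup _ _).map (fun a b hab => by
          simpa using hab)
      · exact (List.nodup_reverse.mpr (Finset.sort_nodup _ _)).map (fun a b hab => by
          simpa using hab)
      · intro p hp hq
        rcases List.mem_map.mp hp with ⟨x, -, rfl⟩
        rcases List.mem_map.mp hq with ⟨y, -, h⟩
        simp at h
    have heqF : L.toFinset = (mListE K N ρ).toFinset := by
      have hmemlV : ∀ x, x ∈ lV ↔ x ∈ SV := fun x => Finset.mem_sort _
      have hmemlO : ∀ x, x ∈ lO ↔ x ∈ SO := fun x => Finset.mem_sort _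
      ext p
      rcases p with ⟨b, i⟩
      rw [List.mem_toFinset, List.mem_toFinset, hmρ, hL]
      simp only [mListE, List.mem_append, List.mem_map, List.mem_reverse, hmemlV, hmemlO,
        hSV, hSO, Finset.mem_union, List.mem_toFinset, Prod.mk.injEq]
      cases b <;> simp <;> tauto
    have hperm : L.Perm (mListE K N ρ) :=
      List.perm_of_nodup_nodup_toFinset_eq hnd hndρ heqF
    refine ⟨ρ, rfl, ?_⟩
    rcases perm_sign (hperm.map (gOp K)) hanti with h | h
    · left
      rw [hprod, h, ← excOp_eq_prod]
    · right
      rw [hprod, h, ← excOp_eq_prod]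
  · left
    rw [hprod]
    rw [← List.exists_duplicate_iff_not_nodup] at hnd
    obtain ⟨x, hx⟩ := hnd
    rw [List.duplicate_iff_sublist] at hx
    obtain ⟨t, ht⟩ := hx.exists_perm_append
    rcases perm_sign (ht.map (gOp K)) hanti with h | h <;>
      rw [h] <;> simp [List.prod_cons, ← mul_assoc, gOp_sq]

section Restrict

variable (K N : ℕ) (hX : ExcInvariant K N)

noncomputable local instance ringCLM (K N : ℕ) : Ring (Hspace K N →L[ℝ] Hspace K N) := by
  infer_instance

noncomputable local instance algCLM (K N : ℕ) : Algebra ℝ (Hspace K N →L[ℝ] Hspace K N) := by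
  infer_instance

local instance ldcCLM (K N : ℕ) : LeftDistribClass (Hspace K N →L[ℝ] Hspace K N) :=
  Distrib.leftDistribClass _

local instance rdcCLM (K N : ℕ) : RightDistribClass (Hspace K N →L[ℝ] Hspace K N) :=
  Distrib.rightDistribClass _

local instance sccCLM (K N : ℕ) :
    SMulCommClass ℝ (Hspace K N →L[ℝ] Hspace K N) (Hspace K N →L[ℝ] Hspace K N) := by
  infer_instance

local instance istCLM (K N : ℕ) :
    IsScalarTower ℝ (Hspace K N →L[ℝ] Hspace K N) (Hspace K N →L[ℝ] Hspace K N) := by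
  infer_instance

lemma excResL_coe (μ : ExIdx K N) (x : Hspace K N) :
    (excResL K N hX μ x : FockSpace K) = excOp K N μ (x : FockSpace K) := rfl

lemma excResL_mul_coe (μ ν : ExIdx K N) (x : Hspace K N) :
    ((excResL K N hX μ * excResL K N hX ν) x : FockSpace K)
      = excOp K N μ (excOp K N ν (x : FockSpace K)) := rfl

lemma excResL_comm (μ ν : ExIdx K N) :
    excResL K N hX μ * excResL K N hX ν = excResL K N hX ν * excResL K N hX μ := by
  refine ContinuousLinearMap.ext fun x => Subtype.ext ?_
  rw [excResL_mul_coe, excResL_mul_coe]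
  have := LinearMap.congr_fun (excOp_comm K N μ ν) (x : FockSpace K)
  rwa [Module.End.mul_apply, Module.End.mul_apply] at this

lemma excResL_mul_structure (hNK : N ≤ K) (μ ν : ExIdx K N) :
    excResL K N hX μ * excResL K N hX ν = 0 ∨
      ∃ ρ : ExIdx K N, ρ.r = μ.r + ν.r ∧
        (excResL K N hX μ * excResL K N hX ν = excResL K N hX ρ ∨
         excResL K N hX μ * excResL K N hX ν = -excResL K N hX ρ) := by
  rcases excOp_mul_structure K N hNK μ ν with h | ⟨ρ, hr, h | h⟩
  · left
    refine ContinuousLinearMap.ext fun x => Subtype.ext ?_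
    rw [excResL_mul_coe]
    have := LinearMap.congr_fun h (x : FockSpace K)
    rwa [Module.End.mul_apply, LinearMap.zero_apply] at this
  · right
    refine ⟨ρ, hr, Or.inl ?_⟩
    refine ContinuousLinearMap.ext fun x => Subtype.ext ?_
    rw [excResL_mul_coe]
    have := LinearMap.congr_fun h (x : FockSpace K)
    rwa [Module.End.mul_apply] at this
  · right
    refine ⟨ρ, hr, Or.inr ?_⟩
    refine ContinuousLinearMap.ext fun x => Subtype.ext ?_
    rw [excResL_mul_coe]
    have := LinearMap.congr_fun h (x : FockSpace K)
    rw [Module.End.mul_apply, LinearMap.neg_apply] at this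
    rw [this]
    rfl

def Bg (m : ℕ) : Set (Hspace K N →L[ℝ] Hspace K N) :=
  {T | ∃ ρ : ExIdx K N, m ≤ ρ.r ∧ T = excResL K N hX ρ}

lemma cluster_eq_Bg_one : clusterSpace K N hX = Submodule.span ℝ (Bg K N hX 1) := by
  unfold clusterSpace
  congr 1
  ext T
  constructor
  · rintro ⟨ρ, rfl⟩
    exact ⟨ρ, ρ.r_pos, rfl⟩
  · rintro ⟨ρ, -, rfl⟩
    exact ⟨ρ, rfl⟩

lemma span_Bg_le (m : ℕ) :
    Submodule.span ℝ (Bg K N hX m) ≤ clusterSpace K N hX := by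
  apply Submodule.span_le.mpr
  rintro T ⟨ρ, -, rfl⟩
  exact Submodule.subset_span ⟨ρ, rfl⟩

lemma mul_gen_Bg (hNK : N ≤ K) (μ : ExIdx K N) {m : ℕ}
    {D : Hspace K N →L[ℝ] Hspace K N} (hD : D ∈ Submodule.span ℝ (Bg K N hX m)) :
    excResL K N hX μ * D ∈ Submodule.span ℝ (Bg K N hX (m + 1)) := by
  induction hD using Submodule.span_induction with
  | mem T hT =>
    obtain ⟨σ, hσ, rfl⟩ := hT
    rcases excResL_mul_structure K N hX hNK μ σ with h | ⟨ρ, hr, h | h⟩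
    · rw [h]; exact Submodule.zero_mem _
    · rw [h]
      refine Submodule.subset_span ⟨ρ, ?_, rfl⟩
      have := μ.r_pos
      omega
    · rw [h]
      refine Submodule.neg_mem _ (Submodule.subset_span ⟨ρ, ?_, rfl⟩)
      have := μ.r_pos
      omega
  | zero =>
    rw [mul_zero]; exact Submodule.zero_mem _
  | add x y hx hy ihx ihy =>
    rw [mul_add]; exact Submodule.add_mem _ ihx ihy
  | smul a x hx ihx =>
    rw [mul_smul_comm]; exact Submodule.smul_mem _ _ ihx

lemma mul_mem_Bg (hNK : N ≤ K) {m : ℕ} {C D : Hspace K N →L[ℝ] Hspace K N}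
    (hC : C ∈ clusterSpace K N hX) (hD : D ∈ Submodule.span ℝ (Bg K N hX m)) :
    C * D ∈ Submodule.span ℝ (Bg K N hX (m + 1)) := by
  induction hC using Submodule.span_induction with
  | mem T hT =>
    obtain ⟨μ, rfl⟩ := hT
    exact mul_gen_Bg K N hX hNK μ hD
  | zero =>
    rw [zero_mul]; exact Submodule.zero_mem _
  | add x y hx hy ihx ihy =>
    rw [add_mul]; exact Submodule.add_mem _ ihx ihy
  | smul a x hx ihx =>
    rw [smul_mul_assoc]; exact Submodule.smul_mem _ _ ihx

lemma cluster_mul_mem (hNK : N ≤ K) {C D : Hspace K N →L[ℝ] Hspace K N}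
    (hC : C ∈ clusterSpace K N hX) (hD : D ∈ clusterSpace K N hX) :
    C * D ∈ clusterSpace K N hX := by
  apply span_Bg_le K N hX 2
  exact mul_mem_Bg K N hX hNK hC ((cluster_eq_Bg_one K N hX) ▸ hD)

lemma pow_mem_Bg (hNK : N ≤ K) {C : Hspace K N →L[ℝ] Hspace K N}
    (hC : C ∈ clusterSpace K N hX) (m : ℕ) :
    C ^ (m + 1) ∈ Submodule.span ℝ (Bg K N hX (m + 1)) := by
  induction m with
  | zero => rw [pow_one]; exact (cluster_eq_Bg_one K N hX) ▸ hC
  | succ m ih =>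
    rw [pow_succ']
    exact mul_mem_Bg K N hX hNK hC ih

lemma cluster_pow_mem (hNK : N ≤ K) {C : Hspace K N →L[ℝ] Hspace K N}
    (hC : C ∈ clusterSpace K N hX) (m : ℕ) :
    C ^ (m + 1) ∈ clusterSpace K N hX :=
  span_Bg_le K N hX (m + 1) (pow_mem_Bg K N hX hNK hC m)

lemma cluster_pow_zero (hNK : N ≤ K) {C : Hspace K N →L[ℝ] Hspace K N}
    (hC : C ∈ clusterSpace K N hX) : C ^ (N + 1) = 0 := by
  have h := pow_mem_Bg K N hX hNK hC N
  have hBe : Bg K N hX (N + 1) = ∅ := by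
    ext T
    simp only [Bg, Set.mem_setOf_eq, Set.mem_empty_iff_false, iff_false, not_exists]
    rintro ρ ⟨hρ, -⟩
    have := ρ.r_le
    omega
  rw [hBe, Submodule.span_empty, Submodule.mem_bot] at h
  exact h

lemma cluster_mul_comm {C D : Hspace K N →L[ℝ] Hspace K N}
    (hC : C ∈ clusterSpace K N hX) (hD : D ∈ clusterSpace K N hX) :
    C * D = D * C := by
  have hgen : ∀ (μ : ExIdx K N) (D' : Hspace K N →L[ℝ] Hspace K N),
      D' ∈ clusterSpace K N hX →
      excResL K N hX μ * D' = D' * excResL K N hX μ := by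
    intro μ D' hD'
    induction hD' using Submodule.span_induction with
    | mem T hT =>
      obtain ⟨ν, rfl⟩ := hT
      exact excResL_comm K N hX μ ν
    | zero => rw [mul_zero, zero_mul]
    | add x y hx hy ihx ihy => rw [mul_add, add_mul, ihx, ihy]
    | smul a x hx ihx => rw [mul_smul_comm, smul_mul_assoc, ihx]
  induction hC using Submodule.span_induction with
  | mem T hT =>
    obtain ⟨μ, rfl⟩ := hT
    exact hgen μ D hD
  | zero => rw [mul_zero, zero_mul]
  | add x y hx hy ihx ihy => rw [mul_add, add_mul, ihx, ihy]
  | smul a x hx ihx => rw [mul_smul_comm, smul_mul_assoc, ihx]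

/-- 𝒢 = {id + C : C ∈ 𝔟} is a connected Abelian Lie group under
composition: closed under composition, contains the identity, has inverses in 𝒢,
is commutative, and is path-connected (indeed convex). -/
theorem Gset_connected_abelian_group
    (K N : ℕ) (hN : 0 < N) (hK : N < K) (hX : ExcInvariant K N) :
    (∀ G ∈ Gset K N hX, ∀ G' ∈ Gset K N hX, G * G' ∈ Gset K N hX) ∧
    (1 : Hspace K N →L[ℝ] Hspace K N) ∈ Gset K N hX ∧
    (∀ G ∈ Gset K N hX, ∃ G' ∈ Gset K N hX, G * G' = 1 ∧ G' * G = 1) ∧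
    (∀ G ∈ Gset K N hX, ∀ G' ∈ Gset K N hX, G * G' = G' * G) ∧
    IsPathConnected (Gset K N hX) ∧ Convex ℝ (Gset K N hX) := by
  have hNK : N ≤ K := le_of_lt hK
  have hmulG : ∀ G ∈ Gset K N hX, ∀ G' ∈ Gset K N hX, G * G' ∈ Gset K N hX := by
    rintro G ⟨C, hC, rfl⟩ G' ⟨C', hC', rfl⟩
    refine ⟨C + C' + C * C', Submodule.add_mem _ (Submodule.add_mem _ hC hC')
      (cluster_mul_mem K N hX hNK hC hC'), ?_⟩
    rw [mul_add, mul_one, add_mul, one_mul]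
    abel
  have hid : (1 : Hspace K N →L[ℝ] Hspace K N) ∈ Gset K N hX :=
    ⟨0, Submodule.zero_mem _, by rw [add_zero]⟩
  have hcomm : ∀ G ∈ Gset K N hX, ∀ G' ∈ Gset K N hX, G * G' = G' * G := by
    rintro G ⟨C, hC, rfl⟩ G' ⟨C', hC', rfl⟩
    have h := cluster_mul_comm K N hX hC hC'
    rw [mul_add, mul_one, add_mul, one_mul, mul_add, mul_one, add_mul, one_mul, h]
    abel
  have hinv : ∀ G ∈ Gset K N hX, ∃ G' ∈ Gset K N hX, G * G' = 1 ∧ G' * G = 1 := by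
    rintro G ⟨C, hC, rfl⟩
    have hC0 : C ^ (N + 1) = 0 := cluster_pow_zero K N hX hNK hC
    set x : Hspace K N →L[ℝ] Hspace K N := -C with hxdef
    have hx0 : x ^ (N + 1) = 0 := by
      rcases Nat.even_or_odd (N + 1) with h | h
      · rw [hxdef, h.neg_pow, hC0]
      · rw [hxdef, h.neg_pow, hC0, neg_zero]
    set D : Hspace K N →L[ℝ] Hspace K N := ∑ i ∈ Finset.Ico 1 (N + 1), x ^ i with hDdef
    have hD : D ∈ clusterSpace K N hX := by
      rw [hDdef]
      apply Submodule.sum_mem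
      intro i hi
      rw [Finset.mem_Ico] at hi
      obtain ⟨m, rfl⟩ : ∃ m, i = m + 1 := ⟨i - 1, by omega⟩
      have hCp : C ^ (m + 1) ∈ clusterSpace K N hX := cluster_pow_mem K N hX hNK hC m
      rcases Nat.even_or_odd (m + 1) with h | h
      · rw [hxdef, h.neg_pow]; exact hCp
      · rw [hxdef, h.neg_pow]; exact Submodule.neg_mem _ hCp
    have hS : (∑ i ∈ Finset.range (N + 1), x ^ i) = 1 + D := by
      have hins : Finset.range (N + 1) = insert 0 (Finset.Ico 1 (N + 1)) := by
        ext a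
        simp only [Finset.mem_range, Finset.mem_insert, Finset.mem_Ico]
        omega
      rw [hins, Finset.sum_insert (by simp), pow_zero, hDdef]
    have hx1 : x - 1 = -(1 + C) := by rw [hxdef]; abel
    have h1 : (1 + D) * (1 + C) = 1 := by
      have hg := geom_sum_mul x (N + 1)
      rw [hx0, hS, hx1, mul_neg, zero_sub] at hg
      exact neg_injective hg
    have h2 : (1 + C) * (1 + D) = 1 := by
      have hg := mul_geom_sum x (N + 1)
      rw [hx0, hS, hx1, neg_mul, zero_sub] at hg
      exact neg_injective hg
    exact ⟨1 + D, ⟨D, hD, rfl⟩, h2, h1⟩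
  have hconv : Convex ℝ (Gset K N hX) := by
    rintro u ⟨C, hC, rfl⟩ v ⟨C', hC', rfl⟩ a b ha hb hab
    refine ⟨a • C + b • C', Submodule.add_mem _ (Submodule.smul_mem _ _ hC)
      (Submodule.smul_mem _ _ hC'), ?_⟩
    have h1 : a • (1 : Hspace K N →L[ℝ] Hspace K N) + b • (1 : Hspace K N →L[ℝ] Hspace K N)
        = 1 := by rw [← add_smul, hab, one_smul]
    calc a • (1 + C) + b • (1 + C')
        = (a • (1 : Hspace K N →L[ℝ] Hspace K N) + b • 1) + (a • C + b • C') := by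
          rw [smul_add, smul_add]; abel
      _ = 1 + (a • C + b • C') := by rw [h1]
  exact ⟨hmulG, hid, hinv, hcomm, hconv.isPathConnected ⟨1, hid⟩, hconv⟩

end Restrict

end CC
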